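/- For all n ≥ 1: MLPO_{n+1} <_W MLPO_{n+2}, i.e., MLPO_{n+1} is continuously Weihrauch reducible to MLPO_{n+2} but not conversely. -/

import Mathlib

open Filter Topology

abbrev Baire : Type := ℕ → ℕ

/-- The pairing `⟨p,q⟩(2n) = p(n)`, `⟨p,q⟩(2n+1) = q(n)`. -/
def pairB (p q : Baire) : Baire := fun n => if n % 2 = 0 then p (n / 2) else q (n / 2)

/-- A problem: a partial multivalued function on Baire space. -/
structure Problem where
  dom : Set Baire
  sol : Baire → Set Baire

/-- Continuous Weihrauch reducibility. -/
def WRed (f g : Problem) : Prop :=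
  ∃ (Kd Hd : Set Baire) (K H : Baire → Baire),
    ContinuousOn K Kd ∧ ContinuousOn H Hd ∧
      ∀ p ∈ f.dom, p ∈ Kd ∧ K p ∈ g.dom ∧
        ∀ q ∈ g.sol (K p), pairB p q ∈ Hd ∧ H (pairB p q) ∈ f.sol p

/-- Strong continuous Weihrauch reducibility. -/
def SWRed (f g : Problem) : Prop :=
  ∃ (Kd Hd : Set Baire) (K H : Baire → Baire),
    ContinuousOn K Kd ∧ ContinuousOn H Hd ∧
      ∀ p ∈ f.dom, p ∈ Kd ∧ K p ∈ g.dom ∧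
        ∀ q ∈ g.sol (K p), q ∈ Hd ∧ H q ∈ f.sol p

def WEquiv (f g : Problem) : Prop := WRed f g ∧ WRed g f
def SWEquiv (f g : Problem) : Prop := SWRed f g ∧ SWRed g f
def WLt (f g : Problem) : Prop := WRed f g ∧ ¬ WRed g f

/-- `range(p-1)`. -/
def rangeM (p : Baire) : Set ℕ := {n | ∃ i, p i = n + 1}

/-- Characteristic function of a set of naturals. -/
noncomputable def chi (A : Set ℕ) : Baire := A.indicator fun _ => 1

noncomputable def EC : Problem where
  dom := Set.univ
  sol := fun p => {chi (rangeM p)}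

noncomputable def EC1 : Problem where
  dom := {p | ((rangeM p)ᶜ).encard ≤ 1}
  sol := fun p => {chi (rangeM p)}

def pfst (r : Baire) : Baire := fun n => r (2 * n)
def psnd (r : Baire) : Baire := fun n => r (2 * n + 1)

noncomputable def SEP : Problem where
  dom := {r | rangeM (pfst r) ∩ rangeM (psnd r) = ∅}
  sol := fun r =>
    {s | ∃ A : Set ℕ, s = chi A ∧ rangeM (pfst r) ⊆ A ∧ A ⊆ (rangeM (psnd r))ᶜ}

noncomputable def SEP1 : Problem where
  dom := {r | rangeM (pfst r) ∩ rangeM (psnd r) = ∅ ∧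
    ((rangeM (pfst r) ∪ rangeM (psnd r))ᶜ).encard ≤ 1}
  sol := SEP.sol

/- rationals -/
def ratEnum (i : ℕ) : ℚ :=
  ((i.unpair.1 : ℚ) - (i.unpair.2.unpair.1 : ℚ)) / ((i.unpair.2.unpair.2 : ℚ) + 1)

def rhoCauchy (p : Baire) (x : ℝ) : Prop :=
  ∀ n, |(ratEnum (p n) : ℝ) - x| ≤ (2 : ℝ) ^ (-(n : ℤ))

def rhoNaive (p : Baire) (x : ℝ) : Prop :=
  Tendsto (fun n => ((ratEnum (p n) : ℝ))) atTop (nhds x)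

def rhoLt (p : Baire) (x : ℝ) : Prop := rangeM p = {n | (ratEnum n : ℝ) < x}
def rhoGt (p : Baire) (x : ℝ) : Prop := rangeM p = {n | x < (ratEnum n : ℝ)}

def rhoCfLt (p : Baire) (x : ℝ) : Prop :=
  (∀ n, p n ≤ 1) ∧ ∀ n, (p n = 1 ↔ (ratEnum n : ℝ) < x)
def rhoCfGt (p : Baire) (x : ℝ) : Prop :=
  (∀ n, p n ≤ 1) ∧ ∀ n, (p n = 1 ↔ x < (ratEnum n : ℝ))

noncomputable def cfTail : List ℕ → ℝ
  | [] => 0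
  | b :: l => 1 / ((b : ℝ) + cfTail l)

noncomputable def cfApprox (p : Baire) (k : ℕ) : ℝ :=
  ((Denumerable.ofNat ℤ (p 0) : ℤ) : ℝ) + cfTail ((List.range k).map fun i => p (i + 1))

def rhoCf (p : Baire) (x : ℝ) : Prop :=
  ((∀ i, 1 ≤ i → 1 ≤ p i) ∧ Tendsto (cfApprox p) atTop (nhds x)) ∨
    (∃ k, 1 ≤ k ∧ p k = 0 ∧ (∀ i, 1 ≤ i → i < k → 1 ≤ p i) ∧
      (2 ≤ k → 2 ≤ p (k - 1)) ∧ x = cfApprox p (k - 1))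

def rhoDec (p : Baire) (x : ℝ) : Prop :=
  (∀ n, 1 ≤ n → p n ≤ 9) ∧
    x = ((Denumerable.ofNat ℤ (p 0) : ℤ) : ℝ) + ∑' n : ℕ, (p (n + 1) : ℝ) / 10 ^ (n + 1)

/-- The implication problem between two representations of ℝ. -/
def implProblem (d1 d2 : Baire → ℝ → Prop) : Problem where
  dom := {p | ∃ x, d1 p x}
  sol := fun p => {q | ∃ x, d1 p x ∧ d2 q x}

/- trees / WKL / choice on Cantor space -/
def wordCode : List Bool → ℕ
  | [] => 0
  | b :: w => 2 * wordCode w + (if b then 2 else 1)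

def prefixList (x : Baire) (k : ℕ) : List Bool := (List.range k).map fun i => decide (x i = 1)

def isTreeCode (t : Baire) : Prop :=
  (∀ n, t n ≤ 1) ∧
    ∀ w v : List Bool, w <+: v → t (wordCode v) = 1 → t (wordCode w) = 1

def WKL : Problem where
  dom := {t | isTreeCode t ∧ {w : List Bool | t (wordCode w) = 1}.Infinite}
  sol := fun t => {x | (∀ n, x n ≤ 1) ∧ ∀ k, t (wordCode (prefixList x k)) = 1}

def Ap (p : Baire) : Set Baire :=
  {x | (∀ n, x n ≤ 1) ∧ ∀ k, wordCode (prefixList x k) ∉ rangeM p}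

def CCantor : Problem where
  dom := {p | (Ap p).Nonempty}
  sol := Ap

def Cle2 : Problem where
  dom := {p | (Ap p).Nonempty ∧ (Ap p).encard ≤ 2}
  sol := Ap

/- limit and parallelization -/
def projCount (r : Baire) (n : ℕ) : Baire := fun k => r (Nat.pair n k)

def limP : Problem where
  dom := {r | ∃ q : Baire, ∀ k, Tendsto (fun n => projCount r n k) atTop (nhds (q k))}
  sol := fun r => {q | ∀ k, Tendsto (fun n => projCount r n k) atTop (nhds (q k))}

def parallel (f : Problem) : Problem where
  dom := {r | ∀ n, projCount r n ∈ f.dom}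
  sol := fun r => {s | ∀ n, projCount s n ∈ f.sol (projCount r n)}

def MCT : Problem where
  dom := {r | ∃ xs : ℕ → ℝ, (∀ n, rhoCauchy (projCount r n) (xs n)) ∧
    Monotone xs ∧ BddAbove (Set.range xs)}
  sol := fun r => {q | ∃ xs : ℕ → ℝ, (∀ n, rhoCauchy (projCount r n) (xs n)) ∧
    Monotone xs ∧ BddAbove (Set.range xs) ∧ rhoCauchy q (⨆ n, xs n)}

/- SORT and RAT -/
open Classical in
noncomputable def sortOut (p : Baire) : Baire := fun k =>
  if {i | p i = 0}.Infinite then 0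
  else if k < {i | p i = 0}.ncard then 0 else 1

noncomputable def SORT : Problem where
  dom := {p | ∀ n, p n ≤ 1}
  sol := fun p => {sortOut p}

def znk (n : ℕ) : Baire := fun k => if k < n then 0 else 1

def RAT : Problem where
  dom := {p | ∃ x, rhoCauchy p x}
  sol := fun p => {s | ∃ x, rhoCauchy p x ∧
    ((∃ n, x = (ratEnum n : ℝ) ∧ s = znk n) ∨
      ((∀ r : ℚ, x ≠ (r : ℝ)) ∧ s = fun _ => 0))}

/- omniscience principles -/
def projFin (m i : ℕ) (r : Baire) : Baire := fun k => r (m * k + i - 1)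
def isZeroSeq (p : Baire) : Prop := ∀ k, p k = 0
def constSeq (i : ℕ) : Baire := fun _ => i

noncomputable def LPOn (n : ℕ) : Problem where
  dom := Set.univ
  sol := fun r => {constSeq ({i | 1 ≤ i ∧ i ≤ n ∧ isZeroSeq (projFin n i r)}.ncard)}

def LLPOn (n : ℕ) : Problem where
  dom := {r | {i | 1 ≤ i ∧ i ≤ n ∧ ¬ isZeroSeq (projFin n i r)}.encard ≤ 1}
  sol := fun r => {s | ∃ i, 1 ≤ i ∧ i ≤ n ∧ isZeroSeq (projFin n i r) ∧ s = constSeq i}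

def MLPOn (n : ℕ) : Problem where
  dom := {r | ∃ i, 1 ≤ i ∧ i ≤ n ∧ isZeroSeq (projFin n i r)}
  sol := fun r => {s | ∃ i, 1 ≤ i ∧ i ≤ n ∧ isZeroSeq (projFin n i r) ∧ s = constSeq i}

def LPO : Problem where
  dom := Set.univ
  sol := fun p => {s | (isZeroSeq p ∧ s = constSeq 1) ∨ (¬ isZeroSeq p ∧ s = constSeq 0)}

/- choice problems on ℕ etc. -/
def Cfin (n : ℕ) : Problem where
  dom := {p | ∃ i, i < n ∧ i ∉ rangeM p}
  sol := fun p => {s | ∃ i, i < n ∧ i ∉ rangeM p ∧ s = constSeq i}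

def ACCfin (n : ℕ) : Problem where
  dom := {p | (∃ i, i < n ∧ i ∉ rangeM p) ∧ ({i | i < n} ∩ rangeM p).encard ≤ 1}
  sol := (Cfin n).sol

def CNat : Problem where
  dom := {p | ∃ i, i ∉ rangeM p}
  sol := fun p => {s | ∃ i, i ∉ rangeM p ∧ s = constSeq i}

/- differentiation -/
instance : Countable (AddMonoidAlgebra ℚ ℕ) :=
  AddMonoidAlgebra.coeff_injective.countable

instance : Countable (Polynomial ℚ) :=
  Polynomial.toFinsupp_injective.countable

noncomputable def polyEnum : ℕ → Polynomial ℚ :=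
  (exists_surjective_nat (Polynomial ℚ)).choose

noncomputable def polyFun (k : ℕ) : C(Set.Icc (0:ℝ) 1, ℝ) :=
  ⟨fun x => ((polyEnum k).map (algebraMap ℚ ℝ)).eval (x : ℝ),
   (((polyEnum k).map (algebraMap ℚ ℝ)).continuous).comp continuous_subtype_val⟩

noncomputable def deltaC (p : Baire) (f : C(Set.Icc (0:ℝ) 1, ℝ)) : Prop :=
  ∀ n, ‖f - polyFun (p n)‖ ≤ (2 : ℝ) ^ (-(n : ℤ))

def IsDerivOn (f g : C(Set.Icc (0:ℝ) 1, ℝ)) : Prop :=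
  ∀ x : Set.Icc (0:ℝ) 1,
    HasDerivWithinAt (Set.IccExtend (by norm_num : (0:ℝ) ≤ 1) f) (g x) (Set.Icc 0 1) (x : ℝ)

noncomputable def diffP : Problem where
  dom := {p | ∃ f g, deltaC p f ∧ IsDerivOn f g}
  sol := fun p => {q | ∃ f g, deltaC p f ∧ IsDerivOn f g ∧ deltaC q g}

/-!
Padding an instance of `MLPO_m` with an extra nonzero component reduces it to `MLPO_{m+1}`.

Conversely, let `(K, H)` reduce `MLPO_k` to `MLPO_m` with `m < k`, and play against it. Given an
input `r`, pick a zero component `i` of `K r`; then `H⟨r, i⟩` names a zero component `j` of `r`. By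
continuity of `H`, rewriting component `j` of `r` to `1` far enough out yields an `r'` on which `H`
still answers `j` if `i` is offered, which is now wrong, so component `i` of `K r'` is nonzero; by
continuity of `K`, the components already nonzero in `K r` stay nonzero. Each round spoils one more
component of the input and one more of `K`'s output. After `m` rounds the input still has a zero
component (as `m < k`) while `K` of it has none.
-/

def tupleFin (k : ℕ) (ps : ℕ → Baire) : Baire := fun c => ps (c % k + 1) (c / k)

theorem projFin_tupleFin {k i : ℕ} (hi : 1 ≤ i) (hik : i ≤ k) (ps : ℕ → Baire) :
    projFin k i (tupleFin k ps) = ps i := by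
  funext n
  have hc : k * n + i - 1 = k * n + (i - 1) := by omega
  have hk : 0 < k := by omega
  simp only [projFin, tupleFin, hc, Nat.mul_add_mod, Nat.mul_add_div hk,
    Nat.mod_eq_of_lt (show i - 1 < k by omega), Nat.div_eq_of_lt (show i - 1 < k by omega)]
  congr 1
  omega

theorem tupleFin_projFin (k : ℕ) (r : Baire) :
    tupleFin k (fun i => projFin k i r) = r := by
  funext c
  simp only [tupleFin, projFin]
  congr 1
  have := Nat.div_add_mod c k
  omega

theorem continuous_tupleFin (k : ℕ) : Continuous (tupleFin k) :=
  continuous_pi fun _ => (continuous_apply _).comp (continuous_apply _)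

theorem continuous_projFin (k i : ℕ) : Continuous (projFin k i) :=
  continuous_pi fun _ => continuous_apply _

theorem continuous_pairB_left (q : Baire) : Continuous fun p => pairB p q := by
  refine continuous_pi fun n => ?_
  by_cases h : n % 2 = 0
  · simpa only [pairB, h, if_true] using continuous_apply _
  · simpa only [pairB, h, if_false] using continuous_const

theorem psnd_pairB (p q : Baire) : psnd (pairB p q) = q := by
  funext n
  simp [psnd, pairB, Nat.add_mod, Nat.mul_add_div]

theorem WRed.of_continuous {f g : Problem} {K : Baire → Baire} (hK : Continuous K)
    (h : ∀ p ∈ f.dom, K p ∈ g.dom ∧ g.sol (K p) ⊆ f.sol p) : WRed f g :=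
  ⟨Set.univ, Set.univ, K, psnd, hK.continuousOn,
    (continuous_pi fun _ => continuous_apply _).continuousOn, fun p hp =>
      ⟨trivial, (h p hp).1, fun q hq => ⟨trivial, by rw [psnd_pairB]; exact (h p hp).2 hq⟩⟩⟩

theorem ContinuousOn.eventually_apply_eq {X : Type*} [TopologicalSpace X] {F : X → Baire}
    {D : Set X} {x : X} (hF : ContinuousOn F D) (hx : x ∈ D) (c : ℕ) :
    ∀ᶠ y in 𝓝 x, y ∈ D → F y c = F x c :=
  eventually_nhdsWithin_iff.1 <| (((continuous_apply c).tendsto _).comp (hF x hx)).eventually_mem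
    (isOpen_discrete {F x c} |>.mem_nhds rfl)

def padOne (m : ℕ) (r : Baire) : Baire :=
  tupleFin (m + 1) (Function.update (fun i => projFin m i r) (m + 1) (constSeq 1))

theorem continuous_padOne (m : ℕ) : Continuous (padOne m) :=
  (continuous_tupleFin _).comp <|
    (continuous_pi fun i => continuous_projFin m i).update (m + 1) continuous_const

theorem projFin_padOne {m i : ℕ} (hi : 1 ≤ i) (him : i ≤ m) (r : Baire) :
    projFin (m + 1) i (padOne m r) = projFin m i r := by
  rw [padOne, projFin_tupleFin hi (by omega), Function.update_of_ne (by omega)]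

theorem not_isZeroSeq_projFin_padOne (m : ℕ) (r : Baire) :
    ¬ isZeroSeq (projFin (m + 1) (m + 1) (padOne m r)) := by
  rw [padOne, projFin_tupleFin (by omega) le_rfl, Function.update_self]
  exact fun h => one_ne_zero (h 0)

theorem MLPOn_le_succ (m : ℕ) : WRed (MLPOn m) (MLPOn (m + 1)) := by
  refine WRed.of_continuous (continuous_padOne m) fun r ⟨i, hi1, him, hiz⟩ => ⟨?_, ?_⟩
  · exact ⟨i, hi1, by omega, by rwa [projFin_padOne hi1 him]⟩
  · rintro s ⟨i, hi1, hik, hiz, rfl⟩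
    have him : i ≤ m := by
      by_contra! h
      exact not_isZeroSeq_projFin_padOne m r (by rwa [show i = m + 1 by omega] at hiz)
    exact ⟨i, hi1, him, by rwa [projFin_padOne hi1 him] at hiz, rfl⟩

open Classical in
noncomputable def nonzeroIdx (k : ℕ) (r : Baire) : Finset ℕ :=
  {i ∈ Finset.Icc 1 k | ¬ isZeroSeq (projFin k i r)}

theorem mem_nonzeroIdx {k i : ℕ} {r : Baire} :
    i ∈ nonzeroIdx k r ↔ (1 ≤ i ∧ i ≤ k) ∧ ¬ isZeroSeq (projFin k i r) := by
  simp [nonzeroIdx]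

theorem mem_MLPOn_dom_iff {k : ℕ} {r : Baire} : r ∈ (MLPOn k).dom ↔ (nonzeroIdx k r).card < k := by
  classical
  have h := (Finset.card_filter_le (Finset.Icc 1 k) fun i => ¬ isZeroSeq (projFin k i r)).lt_iff_ne
  rw [Ne, Finset.card_filter_eq_iff, Nat.card_Icc, Nat.add_sub_cancel] at h
  rw [nonzeroIdx, h]
  simp [MLPOn]

theorem eventually_nonzeroIdx_subset {X : Type*} [TopologicalSpace X] {F : X → Baire}
    {D : Set X} {x : X} (hF : ContinuousOn F D) (hx : x ∈ D) (m : ℕ) :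
    ∀ᶠ y in 𝓝 x, y ∈ D → nonzeroIdx m (F x) ⊆ nonzeroIdx m (F y) := by
  have h : ∀ i ∈ nonzeroIdx m (F x), ∀ᶠ y in 𝓝 x, y ∈ D → i ∈ nonzeroIdx m (F y) := by
    intro i hi
    obtain ⟨hiI, hnz⟩ := mem_nonzeroIdx.1 hi
    obtain ⟨n, hn⟩ := not_forall.1 hnz
    filter_upwards [hF.eventually_apply_eq hx (m * n + i - 1)] with y hy hyD
    exact mem_nonzeroIdx.2 ⟨hiI, fun hz => hn (by rw [projFin, ← hy hyD]; exact hz n)⟩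
  filter_upwards [(eventually_all_finset _).2 h] with y hy hyD i hi using hy i hi hyD

def spoilFrom (k j M : ℕ) (r : Baire) : Baire :=
  tupleFin k (Function.update (fun i => projFin k i r) j
    fun n => if n < M then projFin k j r n else 1)

theorem not_isZeroSeq_projFin_spoilFrom {k j : ℕ} (hj : 1 ≤ j) (hjk : j ≤ k) (M : ℕ) (r : Baire) :
    ¬ isZeroSeq (projFin k j (spoilFrom k j M r)) := by
  rw [spoilFrom, projFin_tupleFin hj hjk, Function.update_self]
  exact fun h => by simpa using h M

theorem nonzeroIdx_spoilFrom_subset (k j M : ℕ) (r : Baire) :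
    nonzeroIdx k (spoilFrom k j M r) ⊆ insert j (nonzeroIdx k r) := by
  intro i hi
  obtain ⟨⟨hi1, hik⟩, hnz⟩ := mem_nonzeroIdx.1 hi
  rcases eq_or_ne i j with rfl | hij
  · exact Finset.mem_insert_self _ _
  · rw [spoilFrom, projFin_tupleFin hi1 hik, Function.update_of_ne hij] at hnz
    exact Finset.mem_insert_of_mem (mem_nonzeroIdx.2 ⟨⟨hi1, hik⟩, hnz⟩)

theorem tendsto_spoilFrom (k j : ℕ) (r : Baire) :
    Tendsto (fun M => spoilFrom k j M r) atTop (𝓝 r) := by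
  have htrunc : Tendsto (fun M n => if n < M then projFin k j r n else 1) atTop
      (𝓝 (projFin k j r)) :=
    tendsto_pi_nhds.2 fun n => tendsto_const_nhds.congr'
      ((eventually_gt_atTop n).mono fun _ h => (if_pos h).symm)
  have hupd : Continuous fun x : Baire => Function.update (fun i => projFin k i r) j x :=
    continuous_const.update j continuous_id
  have h := ((continuous_tupleFin k).tendsto _).comp ((hupd.tendsto _).comp htrunc)
  rwa [Function.comp_def, Function.update_eq_self, tupleFin_projFin] at h

theorem exists_nonzeroIdx_card_le_succ_and_lt {k m : ℕ} {Kd Hd : Set Baire} {K H : Baire → Baire}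
    (hK : ContinuousOn K Kd) (hH : ContinuousOn H Hd)
    (hred : ∀ p ∈ (MLPOn k).dom, p ∈ Kd ∧ K p ∈ (MLPOn m).dom ∧
      ∀ q ∈ (MLPOn m).sol (K p), pairB p q ∈ Hd ∧ H (pairB p q) ∈ (MLPOn k).sol p)
    {r : Baire} (hr : (nonzeroIdx k r).card + 1 < k) :
    ∃ r', (nonzeroIdx k r').card ≤ (nonzeroIdx k r).card + 1 ∧
      (nonzeroIdx m (K r)).card < (nonzeroIdx m (K r')).card := by
  obtain ⟨hrK, ⟨i, hi1, him, hiz⟩, hsol⟩ := hred r (mem_MLPOn_dom_iff.2 (by omega))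
  obtain ⟨hrH, j, hj1, hjk, -, hHr⟩ := hsol (constSeq i) ⟨i, hi1, him, hiz, rfl⟩
  have hcard (M : ℕ) : (nonzeroIdx k (spoilFrom k j M r)).card ≤ (nonzeroIdx k r).card + 1 :=
    (Finset.card_le_card (nonzeroIdx_spoilFrom_subset k j M r)).trans (Finset.card_insert_le _ _)
  have hdom (M : ℕ) : spoilFrom k j M r ∈ (MLPOn k).dom :=
    mem_MLPOn_dom_iff.2 ((hcard M).trans_lt hr)
  have hlim := tendsto_spoilFrom k j r
  obtain ⟨M, hKM, hHM⟩ := ((hlim.eventually (eventually_nonzeroIdx_subset hK hrK m)).and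
    (((continuous_pairB_left _).tendsto _).comp hlim |>.eventually
      (hH.eventually_apply_eq hrH 0))).exists
  set r' := spoilFrom k j M r
  obtain ⟨hr'K, -, hsol'⟩ := hred r' (hdom M)
  -- if `K r'` still had component `i` zero, `H` would still answer `j`, which `r'` has spoiled
  have hi' : i ∈ nonzeroIdx m (K r') := by
    refine mem_nonzeroIdx.2 ⟨⟨hi1, him⟩, fun hz => ?_⟩
    obtain ⟨hr'H, j', -, -, hj'z, hHr'⟩ := hsol' (constSeq i) ⟨i, hi1, him, hz, rfl⟩
    have hjj' : j' = j := by
      have h : H (pairB r' (constSeq i)) 0 = H (pairB r (constSeq i)) 0 := hHM hr'H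
      rwa [hHr', hHr] at h
    rw [hjj'] at hj'z
    exact not_isZeroSeq_projFin_spoilFrom hj1 hjk M r hj'z
  refine ⟨r', hcard M, Finset.card_lt_card ((Finset.ssubset_iff_of_subset (hKM hr'K)).2
    ⟨i, hi', fun h => (mem_nonzeroIdx.1 h).2 hiz⟩)⟩

theorem not_WRed_MLPOn_of_lt {k m : ℕ} (hmk : m < k) : ¬ WRed (MLPOn k) (MLPOn m) := by
  rintro ⟨Kd, Hd, K, H, hK, hH, hred⟩
  have hround (t : ℕ) (ht : t ≤ m) :
      ∃ r, (nonzeroIdx k r).card ≤ t ∧ t ≤ (nonzeroIdx m (K r)).card := by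
    induction t with
    | zero => exact ⟨0, by simp [nonzeroIdx, projFin, isZeroSeq], Nat.zero_le _⟩
    | succ t ih =>
      obtain ⟨r, hrk, hrm⟩ := ih (by omega)
      obtain ⟨r', hr'k, hr'm⟩ :=
        exists_nonzeroIdx_card_le_succ_and_lt hK hH hred (r := r) (by omega)
      exact ⟨r', by omega, by omega⟩
  obtain ⟨r, hrk, hrm⟩ := hround m le_rfl
  obtain ⟨-, hKr, -⟩ := hred r (mem_MLPOn_dom_iff.2 (by omega))
  exact (mem_MLPOn_dom_iff.1 hKr).not_ge hrm

/-- For all `n ≥ 1`: `MLPO_{n+1} <_W MLPO_{n+2}`. -/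
theorem MLPOn_strict : ∀ n, 1 ≤ n → WLt (MLPOn (n + 1)) (MLPOn (n + 2)) :=
  fun n _ => ⟨MLPOn_le_succ (n + 1), not_WRed_MLPOn_of_lt (by omega)⟩
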